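/- Let g, h : ℝⁿ → ℝ be strongly convex with modulus σ > 0 and assume φ := g − h is bounded below. Let ρ > 0 and let sequences (x^k), (y^k), (w^k) in ℝⁿ, stepsizes t_k > 0 and parameters ν_k ≥ 0 satisfy, for every k: w^k ∈ ∂h(x^k), w^k ∈ ∂g(y^k), d^k := y^k − x^k, x^{k+1} = y^k + t_k d^k, and φ(x^{k+1}) ≤ φ(y^k) − ρ t_k² ‖d^k‖² + ν_k. If ∑_{k=0}^{∞} ν_k < ∞, then ∑_{k=0}^{∞} ‖d^k‖² < ∞ (so ‖d^k‖ → 0), and every cluster point of (x^k) is a critical point of φ, i.e. for every cluster point x̄ there exists w̄ ∈ ∂g(x̄) ∩ ∂h(x̄). -/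

import Mathlib

/-!
One step lowers `φ = g - h` by `σ ‖dᵏ‖²`: the subgradient inequalities of `h` at `xᵏ` and of `g`
at `yᵏ` for the common subgradient `wᵏ` each gain `σ/2 ‖dᵏ‖²` from strong convexity. The line
search raises `φ` by at most `νᵏ`, so telescoping against the lower bound of `φ` makes `∑ ‖dᵏ‖²`
finite. If `xᵏ → x̄` along a subsequence then also `yᵏ → x̄`, the subgradients `wᵏ ∈ ∂g(yᵏ)` stay
bounded because `g` is continuous, and along a further subsequence `wᵏ → w̄`; closedness of the
graphs of `∂g` and `∂h` puts `w̄` in `∂g(x̄) ∩ ∂h(x̄)`.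
-/

open Set Filter Topology

noncomputable section

/-- The (convex-analysis) subdifferential of `f` at `x`:
the set of `w` with `f z ≥ f x + ⟨w, z - x⟩` for all `z`. -/
def subdiff {n : ℕ} (f : EuclideanSpace ℝ (Fin n) → ℝ) (x : EuclideanSpace ℝ (Fin n)) :
    Set (EuclideanSpace ℝ (Fin n)) :=
  {w | ∀ z, f x + (inner ℝ w (z - x) : ℝ) ≤ f z}

/-- `f` is strongly convex with modulus `σ`. -/
def StrongConvexWith {n : ℕ} (σ : ℝ) (f : EuclideanSpace ℝ (Fin n) → ℝ) : Prop :=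
  ∀ x y : EuclideanSpace ℝ (Fin n), ∀ t : ℝ, 0 < t → t < 1 →
    f (t • x + (1 - t) • y) ≤ t * f x + (1 - t) * f y - σ / 2 * (t * (1 - t) * ‖x - y‖ ^ 2)

open Metric

variable {n : ℕ}

lemma StrongConvexWith.convexOn {σ : ℝ} {f : EuclideanSpace ℝ (Fin n) → ℝ} (hσ : 0 ≤ σ)
    (hf : StrongConvexWith σ f) : ConvexOn ℝ univ f := by
  refine convexOn_iff_forall_pos.2 ⟨convex_univ, fun p _ q _ a b ha hb hab => ?_⟩
  obtain rfl : b = 1 - a := by linarith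
  have hgap : 0 ≤ σ / 2 * (a * (1 - a) * ‖p - q‖ ^ 2) := by positivity
  simpa only [smul_eq_mul] using (hf p q a ha (by linarith)).trans (by linarith)

lemma StrongConvexWith.continuous {σ : ℝ} {f : EuclideanSpace ℝ (Fin n) → ℝ} (hσ : 0 ≤ σ)
    (hf : StrongConvexWith σ f) : Continuous f :=
  continuousOn_univ.1 ((hf.convexOn hσ).continuousOn isOpen_univ)

lemma StrongConvexWith.add_inner_add_sq_le {σ : ℝ} {f : EuclideanSpace ℝ (Fin n) → ℝ}
    (hf : StrongConvexWith σ f) {x w : EuclideanSpace ℝ (Fin n)}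
    (hw : w ∈ subdiff f x) (z : EuclideanSpace ℝ (Fin n)) :
    f x + inner ℝ w (z - x) + σ / 2 * ‖z - x‖ ^ 2 ≤ f z := by
  -- compare `f` at `t • z + (1 - t) • x` with both inequalities, divide by `t`, let `t → 0⁺`
  have hshrunk : ∀ t ∈ Ioo (0 : ℝ) 1,
      f x + inner ℝ w (z - x) + (1 - t) * (σ / 2 * ‖z - x‖ ^ 2) ≤ f z := by
    rintro t ⟨ht0, ht1⟩
    have hsub := hw (t • z + (1 - t) • x)
    rw [show t • z + (1 - t) • x - x = t • (z - x) by module, real_inner_smul_right] at hsub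
    have hsc := hf z x t ht0 ht1
    refine le_of_mul_le_mul_left ?_ ht0
    linarith
  have hlim : Tendsto (fun t : ℝ => f x + inner ℝ w (z - x) + (1 - t) * (σ / 2 * ‖z - x‖ ^ 2))
      (𝓝[>] 0) (𝓝 (f x + inner ℝ w (z - x) + σ / 2 * ‖z - x‖ ^ 2)) := by
    have hcont : Continuous fun t : ℝ =>
        f x + inner ℝ w (z - x) + (1 - t) * (σ / 2 * ‖z - x‖ ^ 2) := by
      fun_prop
    simpa using (hcont.tendsto 0).mono_left nhdsWithin_le_nhds
  exact le_of_tendsto hlim (eventually_of_mem (Ioo_mem_nhdsGT one_pos) hshrunk)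

lemma add_mul_sq_norm_sub_le_of_mem_subdiff {σ : ℝ} {g h : EuclideanSpace ℝ (Fin n) → ℝ}
    (hg : StrongConvexWith σ g) (hh : StrongConvexWith σ h)
    {x y w : EuclideanSpace ℝ (Fin n)} (hwh : w ∈ subdiff h x) (hwg : w ∈ subdiff g y) :
    g y - h y + σ * ‖y - x‖ ^ 2 ≤ g x - h x := by
  have hhx := hh.add_inner_add_sq_le hwh y
  have hgy := hg.add_inner_add_sq_le hwg x
  rw [norm_sub_rev x y, ← neg_sub y x, inner_neg_right] at hgy
  linarith

lemma summable_of_le_sub_succ_add {a Φ ν : ℕ → ℝ} (ha : ∀ k, 0 ≤ a k)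
    (hΦ : BddBelow (range Φ)) (hν0 : ∀ k, 0 ≤ ν k) (hν : Summable ν)
    (h : ∀ k, a k ≤ Φ k - Φ (k + 1) + ν k) : Summable a := by
  obtain ⟨m, hm⟩ := hΦ
  refine summable_of_sum_range_le (c := Φ 0 - m + ∑' k, ν k) ha fun N => ?_
  calc ∑ k ∈ Finset.range N, a k
      ≤ ∑ k ∈ Finset.range N, (Φ k - Φ (k + 1) + ν k) := Finset.sum_le_sum fun k _ => h k
    _ = Φ 0 - Φ N + ∑ k ∈ Finset.range N, ν k := by
      rw [Finset.sum_add_distrib, Finset.sum_range_sub']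
    _ ≤ Φ 0 - m + ∑' k, ν k := by
      gcongr
      exacts [hm ⟨N, rfl⟩, hν.sum_le_tsum _ fun k _ => hν0 k]

lemma exists_norm_le_of_mem_subdiff {f : EuclideanSpace ℝ (Fin n) → ℝ} (hf : Continuous f)
    (x₀ : EuclideanSpace ℝ (Fin n)) :
    ∃ C, ∀ y w, dist y x₀ ≤ 1 → w ∈ subdiff f y → ‖w‖ ≤ C := by
  obtain ⟨C, hC⟩ := (isCompact_closedBall x₀ 2).exists_bound_of_continuousOn hf.continuousOn
  refine ⟨2 * C, fun y w hy hw => ?_⟩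
  -- test the subgradient inequality in the unit direction of `w` (`u = 0` when `w = 0`)
  set u := ‖w‖⁻¹ • w
  have hu : ‖u‖ ≤ 1 := by
    rw [norm_smul, norm_inv, norm_norm]
    exact inv_mul_le_one_of_le₀ le_rfl (norm_nonneg w)
  have hwu : inner ℝ w u = ‖w‖ := by
    rw [real_inner_smul_right, real_inner_self_eq_norm_sq, sq, ← mul_assoc, inv_mul_mul_self]
  have hyu := hw (y + u)
  rw [add_sub_cancel_left, hwu] at hyu
  have hy2 : y ∈ closedBall x₀ 2 := by rw [mem_closedBall]; linarith
  have hyu2 : y + u ∈ closedBall x₀ 2 := by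
    rw [mem_closedBall]
    calc dist (y + u) x₀ ≤ dist (y + u) y + dist y x₀ := dist_triangle _ _ _
      _ = ‖u‖ + dist y x₀ := by rw [dist_eq_norm, add_sub_cancel_left]
      _ ≤ 2 := by linarith
  have h1 := hC _ hyu2
  have h2 := hC _ hy2
  rw [Real.norm_eq_abs, abs_le] at h1 h2
  linarith

lemma mem_subdiff_of_tendsto {f : EuclideanSpace ℝ (Fin n) → ℝ} (hf : Continuous f)
    {ι : Type*} {l : Filter ι} [l.NeBot] {x w : ι → EuclideanSpace ℝ (Fin n)}
    {xbar wbar : EuclideanSpace ℝ (Fin n)} (hx : Tendsto x l (𝓝 xbar)) (hw : Tendsto w l (𝓝 wbar))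
    (hmem : ∀ i, w i ∈ subdiff f (x i)) : wbar ∈ subdiff f xbar := fun z =>
  le_of_tendsto (((hf.tendsto xbar).comp hx).add (hw.inner (tendsto_const_nhds.sub hx)))
    (Eventually.of_forall fun i => hmem i z)

lemma exists_mem_subdiff_inter_of_tendsto {g h : EuclideanSpace ℝ (Fin n) → ℝ}
    (hg : Continuous g) (hh : Continuous h) {x y w : ℕ → EuclideanSpace ℝ (Fin n)}
    {xbar : EuclideanSpace ℝ (Fin n)} (hx : Tendsto x atTop (𝓝 xbar))
    (hd : Tendsto (fun k => y k - x k) atTop (𝓝 0))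
    (hwh : ∀ k, w k ∈ subdiff h (x k)) (hwg : ∀ k, w k ∈ subdiff g (y k)) :
    ∃ wbar, wbar ∈ subdiff g xbar ∩ subdiff h xbar := by
  have hy : Tendsto y atTop (𝓝 xbar) := by simpa using hx.add hd
  obtain ⟨C, hC⟩ := exists_norm_le_of_mem_subdiff hg xbar
  have hw_bdd : ∀ᶠ k in atTop, w k ∈ closedBall 0 C := by
    filter_upwards [hy (closedBall_mem_nhds xbar one_pos)] with k hk
    simpa using hC _ _ hk (hwg k)
  obtain ⟨wbar, -, φ, hφ, hwφ⟩ :=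
    tendsto_subseq_of_frequently_bounded isBounded_closedBall hw_bdd.frequently
  exact ⟨wbar, mem_subdiff_of_tendsto hg (hy.comp hφ.tendsto_atTop) hwφ fun k => hwg (φ k),
    mem_subdiff_of_tendsto hh (hx.comp hφ.tendsto_atTop) hwφ fun k => hwh (φ k)⟩

theorem stmt10_general {n : ℕ} (g h : EuclideanSpace ℝ (Fin n) → ℝ) (σ ρ : ℝ)
    (hσ : 0 < σ) (hρ : 0 < ρ)
    (hgs : StrongConvexWith σ g) (hhs : StrongConvexWith σ h)
    (hbd : BddBelow (Set.range fun z => g z - h z))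
    (x y w : ℕ → EuclideanSpace ℝ (Fin n)) (t ν : ℕ → ℝ)
    (hν : ∀ k, 0 ≤ ν k)
    (hwh : ∀ k, w k ∈ subdiff h (x k)) (hwg : ∀ k, w k ∈ subdiff g (y k))
    (hls : ∀ k, g (x (k + 1)) - h (x (k + 1)) ≤
      (g (y k) - h (y k)) - ρ * t k ^ 2 * ‖y k - x k‖ ^ 2 + ν k)
    (hsum : Summable ν) :
    Summable (fun k => ‖y k - x k‖ ^ 2) ∧
      (∀ xbar : EuclideanSpace ℝ (Fin n),
        (∃ φ : ℕ → ℕ, StrictMono φ ∧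
          Filter.Tendsto (fun ℓ => x (φ ℓ)) Filter.atTop (nhds xbar)) →
        ∃ wbar, wbar ∈ subdiff g xbar ∩ subdiff h xbar) := by
  have hdecrease : ∀ k, σ * ‖y k - x k‖ ^ 2 ≤
      (g (x k) - h (x k)) - (g (x (k + 1)) - h (x (k + 1))) + ν k := fun k => by
    have hstep := add_mul_sq_norm_sub_le_of_mem_subdiff hgs hhs (hwh k) (hwg k)
    have hsearch : 0 ≤ ρ * t k ^ 2 * ‖y k - x k‖ ^ 2 := by positivity
    linarith [hls k]
  have hd : Summable fun k => ‖y k - x k‖ ^ 2 :=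
    (summable_mul_left_iff hσ.ne').1 <| summable_of_le_sub_succ_add (fun k => by positivity)
      (hbd.mono (range_comp_subset_range x _)) hν hsum hdecrease
  refine ⟨hd, fun xbar ⟨φ, hφ, hx⟩ => ?_⟩
  have hd0 : Tendsto (fun k => y k - x k) atTop (𝓝 0) := by
    rw [tendsto_zero_iff_norm_tendsto_zero]
    simpa using hd.tendsto_atTop_zero.sqrt
  exact exists_mem_subdiff_inter_of_tendsto (hgs.continuous hσ.le) (hhs.continuous hσ.le) hx
    (hd0.comp hφ.tendsto_atTop) (fun k => hwh (φ k)) (fun k => hwg (φ k))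

theorem stmt10 {n : ℕ} (g h : EuclideanSpace ℝ (Fin n) → ℝ) (σ ρ : ℝ)
    (hσ : 0 < σ) (hρ : 0 < ρ)
    (hgs : StrongConvexWith σ g) (hhs : StrongConvexWith σ h)
    (hbd : BddBelow (Set.range fun z => g z - h z))
    (x y w : ℕ → EuclideanSpace ℝ (Fin n)) (t ν : ℕ → ℝ)
    (ht : ∀ k, 0 < t k) (hν : ∀ k, 0 ≤ ν k)
    (hwh : ∀ k, w k ∈ subdiff h (x k)) (hwg : ∀ k, w k ∈ subdiff g (y k))
    (hstep : ∀ k, x (k + 1) = y k + t k • (y k - x k))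
    (hls : ∀ k, g (x (k + 1)) - h (x (k + 1)) ≤
      (g (y k) - h (y k)) - ρ * t k ^ 2 * ‖y k - x k‖ ^ 2 + ν k)
    (hsum : Summable ν) :
    Summable (fun k => ‖y k - x k‖ ^ 2) ∧
      (∀ xbar : EuclideanSpace ℝ (Fin n),
        (∃ φ : ℕ → ℕ, StrictMono φ ∧
          Filter.Tendsto (fun ℓ => x (φ ℓ)) Filter.atTop (nhds xbar)) →
        ∃ wbar, wbar ∈ subdiff g xbar ∩ subdiff h xbar) :=
  stmt10_general g h σ ρ hσ hρ hgs hhs hbd x y w t ν hν hwh hwg hls hsum
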